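/- arXiv:2303.11025 — 2 statements merged into one kernel-verified Lean document; each statement's English description precedes it below -/
import Mathlib

section
/- If P ∈ Π(ω) is an acyclic reduced pipe dream and π ∈ S_n is a linear extension of P, then π ≤ ω in the weak order. -/
/-- A pipe dream of size `n` on the triangular shape, with boxes indexed by pairs
`(r, c)` of a row `r` and a column `c`, both `0`-indexed (rows increase southwards,
columns increase eastwards).  `cross r c = true` means that box `(r, c)` contains a
crossing tile; all other boxes contain elbow tiles.  Crossings are only allowed in
the full boxes of the triangular shape, i.e. those with `r + c + 2 ≤ n` (the boxes
with `r + c + 1 = n` are the half-boxes on the antidiagonal, which are forced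
elbows).  The `n` pipes enter horizontally on the left side in rows `0, …, n-1` and
exit vertically on the top side in columns `0, …, n-1`; pipe `k` is the pipe
entering at row `k`.  An elbow tile connects the west edge of its box to the north
edge (the pipe travelling through this elbow passes northwest of the tile) and the
south edge to the east edge (this pipe passes southeast of the tile); a crossing
tile connects west to east and south to north. -/
structure PipeDream (n : ℕ) where
  cross : ℕ → ℕ → Bool
  inShape : ∀ r c : ℕ, cross r c = true → r + c + 2 ≤ n

namespace PipeDream

variable {n : ℕ}

/-- `(P.pipes r c).1` is the label of the pipe entering box `(r, c)` from the west,
and `(P.pipes r c).2` is the label of the pipe entering box `(r, c)` from the south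
(junk value `0` if there is no box below box `(r, c)` in the triangular shape). -/
def pipes (P : PipeDream n) : ℕ → ℕ → ℕ × ℕ
  | r, c =>
    (if hc : c = 0 then r
      else if P.cross r (c - 1) then (pipes P r (c - 1)).1 else (pipes P r (c - 1)).2,
     if hr : r + c + 2 ≤ n then
        if P.cross (r + 1) c then (pipes P (r + 1) c).2 else (pipes P (r + 1) c).1
      else 0)
  termination_by r c => (n - r) + c
  decreasing_by all_goals omega

/-- The pipe entering box `(r, c)` from the west (travelling eastwards). -/
def west (P : PipeDream n) (r c : ℕ) : ℕ := (pipes P r c).1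

/-- The pipe entering box `(r, c)` from the south (travelling northwards). -/
def south (P : PipeDream n) (r c : ℕ) : ℕ := (pipes P r c).2

/-- The pipe exiting on the top side at column `c`. -/
def exitPipe (P : PipeDream n) (c : ℕ) : ℕ :=
  if P.cross 0 c then P.south 0 c else P.west 0 c

/-- `P` has exit permutation `ω`, i.e. the pipe exiting at column `c` is `ω c`;
equivalently, pipe `k` exits at column `ω⁻¹ k`. -/
def HasExitPerm (P : PipeDream n) (ω : Equiv.Perm (Fin n)) : Prop :=
  ∀ c : Fin n, P.exitPipe c.val = (ω c).val

/-- `P` is reduced: any two of its pipes cross at most once. -/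
def Reduced (P : PipeDream n) : Prop :=
  ∀ r c r' c' : ℕ, P.cross r c = true → P.cross r' c' = true → (r, c) ≠ (r', c') →
    ¬ ((P.west r c = P.west r' c' ∧ P.south r c = P.south r' c') ∨
        (P.west r c = P.south r' c' ∧ P.south r c = P.west r' c'))

/-- The arcs of the contact graph `P♯` of `P`: there is one arc for each elbow
contact of `P` (an elbow tile in a full box of the triangular shape), oriented from
the pipe passing northwest of the contact (the one travelling west-to-north) to the
pipe passing southeast of it (the one travelling south-to-east). -/
def Arc (P : PipeDream n) (i j : ℕ) : Prop :=
  ∃ r c : ℕ, r + c + 2 ≤ n ∧ P.cross r c = false ∧ P.west r c = i ∧ P.south r c = j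

/-- `P` is acyclic: its contact graph has no directed cycle. -/
def Acyclic (P : PipeDream n) : Prop := ∀ i : ℕ, ¬ Relation.TransGen P.Arc i i

/-- `i ⪯_P j` : there is a directed path (possibly empty) from `i` to `j` in the
contact graph of `P`. -/
def Path (P : PipeDream n) (i j : ℕ) : Prop := Relation.ReflTransGen P.Arc i j

/-- `π` is a linear extension of `P` : `π⁻¹ i < π⁻¹ j` for every arc `i → j` of the
contact graph of `P`. -/
def LinExt (P : PipeDream n) (π : Equiv.Perm (Fin n)) : Prop :=
  ∀ i j : Fin n, P.Arc i.val j.val → π⁻¹ i < π⁻¹ j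

/-- There is a contact (an elbow tile in a full box) between pipes `i` and `j`
at box `b`. -/
def ContactAt (P : PipeDream n) (i j : ℕ) (b : ℕ × ℕ) : Prop :=
  b.1 + b.2 + 2 ≤ n ∧ P.cross b.1 b.2 = false ∧
    ((P.west b.1 b.2 = i ∧ P.south b.1 b.2 = j) ∨
      (P.west b.1 b.2 = j ∧ P.south b.1 b.2 = i))

/-- `P'` is obtained from `P` by the flip exchanging the contact at box `b` with the
crossing at box `b'` (a contact and a crossing between the same two pipes). -/
def IsFlip (P P' : PipeDream n) (b b' : ℕ × ℕ) : Prop :=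
  b ≠ b' ∧
  P.cross b.1 b.2 = false ∧ P.cross b'.1 b'.2 = true ∧
  P'.cross b.1 b.2 = true ∧ P'.cross b'.1 b'.2 = false ∧
  (∀ r c : ℕ, (r, c) ≠ b → (r, c) ≠ b' → P.cross r c = P'.cross r c) ∧
  ((P.west b.1 b.2 = P.west b'.1 b'.2 ∧ P.south b.1 b.2 = P.south b'.1 b'.2) ∨
    (P.west b.1 b.2 = P.south b'.1 b'.2 ∧ P.south b.1 b.2 = P.west b'.1 b'.2))

/-- There is an increasing flip from `P` to `P'`: a flip exchanging a contact at a
box `b` weakly southwest of the box `b'` of the corresponding crossing. -/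
def IncFlip (P P' : PipeDream n) : Prop :=
  ∃ b b' : ℕ × ℕ, P.IsFlip P' b b' ∧ b'.1 ≤ b.1 ∧ b.2 ≤ b'.2

end PipeDream

/-- The weak order on permutations of `Fin n` : `π ≤ σ` if and only if
`Inv(π) ⊆ Inv(σ)`, where `Inv(π)` is the set of pairs `(i, j)` with `i < j` and
`π⁻¹ i > π⁻¹ j`. -/
def WeakLE {n : ℕ} (π σ : Equiv.Perm (Fin n)) : Prop :=
  ∀ i j : Fin n, i < j → π⁻¹ j < π⁻¹ i → σ⁻¹ j < σ⁻¹ i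

/-!
Read column by column, the pipes of column `c + 1` are those of column `c` except the one
leaving through the top, and two pipes swap their vertical order exactly at a box where they
cross. Take pipes `i < j`. If they cross, then, `P` being reduced, they cross exactly once, and
`i` enters that box from the west (before it, `i` runs above `j`); from then on `j` runs above
`i`, so `j` exits first: `ω⁻¹ j < ω⁻¹ i`. If they never cross, `i` runs above `j` until it
exits, and climbing along the elbows between them gives a directed path from `i` to `j` in the
contact graph, so every linear extension has `π⁻¹ i < π⁻¹ j`.
-/

namespace PipeDream

variable {n : ℕ} (P : PipeDream n)

lemma west_zero (r : ℕ) : P.west r 0 = r := by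
  rw [west, pipes]; simp

lemma west_succ (r c : ℕ) :
    P.west r (c + 1) = if P.cross r c then P.west r c else P.south r c := by
  rw [west, pipes]; simp [west, south]

lemma south_eq {r c : ℕ} (h : r + c + 2 ≤ n) :
    P.south r c = if P.cross (r + 1) c then P.south (r + 1) c else P.west (r + 1) c := by
  rw [south, pipes]; simp [west, south, h]

lemma cross_eq_false_of_lt {r c : ℕ} (h : n < r + c + 2) : P.cross r c = false :=
  Bool.eq_false_iff.2 fun h' => absurd (P.inShape r c h') (by omega)

lemma exists_elbow_ge (r c : ℕ) : ∃ f, r ≤ f ∧ P.cross f c = false :=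
  ⟨r + n, Nat.le_add_right r n, P.cross_eq_false_of_lt (by omega)⟩

def elbowFrom (r c : ℕ) : ℕ := Nat.find (P.exists_elbow_ge r c)

lemma le_elbowFrom (r c : ℕ) : r ≤ P.elbowFrom r c :=
  (Nat.find_spec (P.exists_elbow_ge r c)).1

lemma cross_elbowFrom (r c : ℕ) : P.cross (P.elbowFrom r c) c = false :=
  (Nat.find_spec (P.exists_elbow_ge r c)).2

lemma elbowFrom_le {r c t : ℕ} (hrt : r ≤ t) (ht : P.cross t c = false) :
    P.elbowFrom r c ≤ t :=
  Nat.find_min' _ ⟨hrt, ht⟩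

lemma cross_of_lt_elbowFrom {r c t : ℕ} (hrt : r ≤ t) (ht : t < P.elbowFrom r c) :
    P.cross t c = true := by
  by_contra h
  exact absurd (P.elbowFrom_le hrt (by simpa using h)) (not_le.2 ht)

lemma elbowFrom_eq_self {r c : ℕ} (h : P.cross r c = false) : P.elbowFrom r c = r :=
  le_antisymm (P.elbowFrom_le le_rfl h) (P.le_elbowFrom r c)

lemma lt_elbowFrom_of_cross {r c : ℕ} (h : P.cross r c = true) : r < P.elbowFrom r c := by
  refine lt_of_le_of_ne (P.le_elbowFrom r c) fun hr => ?_
  simpa [← hr, h] using P.cross_elbowFrom r c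

lemma elbowFrom_eq_of_le {r s c : ℕ} (hrs : r ≤ s) (hs : s ≤ P.elbowFrom r c) :
    P.elbowFrom s c = P.elbowFrom r c :=
  le_antisymm (P.elbowFrom_le hs (P.cross_elbowFrom r c))
    (P.elbowFrom_le (hrs.trans (P.le_elbowFrom s c)) (P.cross_elbowFrom s c))

-- The half-box in row `n - c - 1` is an elbow.
lemma elbowFrom_add_le {r c : ℕ} (h : r + c + 1 ≤ n) : P.elbowFrom r c + c + 1 ≤ n := by
  have := P.elbowFrom_le (r := r) (c := c) (t := n - c - 1) (by omega)
    (P.cross_eq_false_of_lt (by omega))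
  omega

lemma exists_last_elbow_before {t r c : ℕ} (ht : P.cross t c = false) (htr : t < r) :
    ∃ e, t ≤ e ∧ e < r ∧ P.cross e c = false ∧ r ≤ P.elbowFrom (e + 1) c := by
  let IsElbow (s : ℕ) : Prop := P.cross s c = false
  set e := Nat.findGreatest IsElbow (r - 1)
  have hle : t ≤ r - 1 := by omega
  refine ⟨e, Nat.le_findGreatest hle ht, ?_, Nat.findGreatest_spec (P := IsElbow) hle ht, ?_⟩
  · have := Nat.findGreatest_le (P := IsElbow) (r - 1)
    omega
  · by_contra! hlt
    exact Nat.findGreatest_is_greatest (P.le_elbowFrom (e + 1) c) (by omega)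
      (P.cross_elbowFrom (e + 1) c)

lemma south_eq_west_elbowFrom {r c : ℕ} (h : r + c + 2 ≤ n) :
    P.south r c = P.west (P.elbowFrom (r + 1) c) c := by
  rw [P.south_eq h]
  cases hcr : P.cross (r + 1) c with
  | false => simp [P.elbowFrom_eq_self hcr]
  | true =>
    rw [if_pos rfl, south_eq_west_elbowFrom (P.inShape _ _ hcr),
      P.elbowFrom_eq_of_le (Nat.le_succ _) (P.lt_elbowFrom_of_cross hcr)]
termination_by n - r

lemma exitPipe_eq (c : ℕ) : P.exitPipe c = P.west (P.elbowFrom 0 c) c := by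
  unfold exitPipe
  cases h0 : P.cross 0 c with
  | false => simp [P.elbowFrom_eq_self h0]
  | true =>
    rw [if_pos rfl, P.south_eq_west_elbowFrom (P.inShape 0 c h0),
      P.elbowFrom_eq_of_le (Nat.zero_le _) (P.lt_elbowFrom_of_cross h0)]

lemma arc_west_south {r c : ℕ} (h : r + c + 2 ≤ n) (hcr : P.cross r c = false) :
    P.Arc (P.west r c) (P.south r c) :=
  ⟨r, c, h, hcr, rfl, rfl⟩

/-- The row of column `c` whose pipe occupies row `r` of column `c + 1`. -/
def srcRow (r c : ℕ) : ℕ := if P.cross r c then r else P.elbowFrom (r + 1) c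

lemma srcRow_of_cross {r c : ℕ} (h : P.cross r c = true) : P.srcRow r c = r := by
  simp [srcRow, h]

lemma srcRow_of_elbow {r c : ℕ} (h : P.cross r c = false) :
    P.srcRow r c = P.elbowFrom (r + 1) c := by
  simp [srcRow, h]

lemma le_srcRow (r c : ℕ) : r ≤ P.srcRow r c := by
  unfold srcRow
  split
  · exact le_rfl
  · exact (Nat.le_succ r).trans (P.le_elbowFrom _ _)

lemma srcRow_add_le {r c : ℕ} (h : r + c + 2 ≤ n) : P.srcRow r c + c + 1 ≤ n := by
  unfold srcRow
  split
  · omega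
  · exact P.elbowFrom_add_le (by omega)

lemma west_succ_eq_west_srcRow {r c : ℕ} (h : r + c + 2 ≤ n) :
    P.west r (c + 1) = P.west (P.srcRow r c) c := by
  cases hcr : P.cross r c with
  | false => rw [west_succ, srcRow_of_elbow _ hcr, ← P.south_eq_west_elbowFrom h]; simp [hcr]
  | true => rw [west_succ, srcRow_of_cross _ hcr]; simp [hcr]

lemma srcRow_ne_elbowFrom_zero (r c : ℕ) : P.srcRow r c ≠ P.elbowFrom 0 c := by
  cases hcr : P.cross r c with
  | true =>
    rw [P.srcRow_of_cross hcr]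
    rintro rfl
    simp [P.cross_elbowFrom] at hcr
  | false =>
    have := P.elbowFrom_le (Nat.zero_le r) hcr
    have := P.le_elbowFrom (r + 1) c
    rw [P.srcRow_of_elbow hcr]
    omega

lemma exists_srcRow_eq {r c : ℕ} (h : r + c + 1 ≤ n) (hr : r ≠ P.elbowFrom 0 c) :
    ∃ r', r' + c + 2 ≤ n ∧ P.srcRow r' c = r := by
  cases hcr : P.cross r c with
  | true => exact ⟨r, P.inShape r c hcr, P.srcRow_of_cross hcr⟩
  | false =>
    have hlt : P.elbowFrom 0 c < r := (P.elbowFrom_le (Nat.zero_le r) hcr).lt_of_ne' hr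
    obtain ⟨e, -, her, he, hre⟩ := P.exists_last_elbow_before (P.cross_elbowFrom 0 c) hlt
    refine ⟨e, by omega, ?_⟩
    rw [P.srcRow_of_elbow he]
    exact le_antisymm (P.elbowFrom_le her hcr) hre

lemma srcRow_lt_or_cross {a b c : ℕ} (hab : a < b) :
    P.srcRow a c < P.srcRow b c ∨
      (P.cross b c = true ∧ P.srcRow a c = P.elbowFrom (b + 1) c) := by
  cases ha : P.cross a c with
  | true => exact .inl ((P.srcRow_of_cross ha).trans_lt (hab.trans_le (P.le_srcRow b c)))
  | false =>
    rw [P.srcRow_of_elbow ha]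
    by_cases hb : b < P.elbowFrom (a + 1) c
    · exact .inr ⟨P.cross_of_lt_elbowFrom hab hb, (P.elbowFrom_eq_of_le (by omega) hb).symm⟩
    · refine .inl ?_
      cases hbc : P.cross b c with
      | true => rw [P.srcRow_of_cross hbc]; exact (not_lt.1 hb).lt_of_ne (by
          rintro rfl; simp [P.cross_elbowFrom] at hbc)
      | false => rw [P.srcRow_of_elbow hbc]; have := P.le_elbowFrom (b + 1) c; omega

lemma srcRow_injective (c : ℕ) : Function.Injective (P.srcRow · c) := by
  refine Function.Injective.of_lt_imp_ne fun a b hab => ?_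
  rcases P.srcRow_lt_or_cross (c := c) hab with h | ⟨hbc, h⟩
  · exact h.ne
  · have := P.le_elbowFrom (b + 1) c
    simp only [P.srcRow_of_cross hbc, h]
    omega

lemma west_lt : ∀ {r c : ℕ}, r + c + 1 ≤ n → P.west r c < n
  | r, 0, h => by rw [west_zero]; omega
  | r, c + 1, h => by
    rw [P.west_succ_eq_west_srcRow (by omega)]
    exact west_lt (P.srcRow_add_le (by omega))

lemma west_ne_west : ∀ {a b c : ℕ}, a ≠ b → a + c + 1 ≤ n → b + c + 1 ≤ n →
    P.west a c ≠ P.west b c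
  | a, b, 0, hab, _, _ => by simpa [west_zero] using hab
  | a, b, c + 1, hab, ha, hb => by
    rw [P.west_succ_eq_west_srcRow (by omega), P.west_succ_eq_west_srcRow (by omega)]
    exact west_ne_west ((P.srcRow_injective c).ne hab) (P.srcRow_add_le (by omega))
      (P.srcRow_add_le (by omega))

lemma lt_of_arc {i j : ℕ} (h : P.Arc i j) : i < n := by
  obtain ⟨r, c, hrc, -, rfl, -⟩ := h
  exact P.west_lt (by omega)

def Crosses (p q r c : ℕ) : Prop :=
  P.cross r c = true ∧ s(P.west r c, P.south r c) = s(p, q)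

def Above (c p q : ℕ) : Prop :=
  ∃ a b, a < b ∧ b + c + 1 ≤ n ∧ P.west a c = p ∧ P.west b c = q

variable {P}

lemma Crosses.symm {p q r c : ℕ} (h : P.Crosses p q r c) : P.Crosses q p r c :=
  ⟨h.1, h.2.trans Sym2.eq_swap⟩

lemma Reduced.eq_of_crosses (hP : P.Reduced) {p q r c r' c' : ℕ} (h : P.Crosses p q r c)
    (h' : P.Crosses p q r' c') : r = r' ∧ c = c' := by
  by_contra hne
  exact hP r c r' c' h.1 h'.1 (by simpa using hne) (Sym2.eq_iff.1 (h.2.trans h'.2.symm))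

lemma Above.ne {c p q : ℕ} (h : P.Above c p q) : p ≠ q := by
  obtain ⟨a, b, hab, hb, rfl, rfl⟩ := h
  exact P.west_ne_west hab.ne (by omega) hb

lemma Above.lt {c p q : ℕ} (h : P.Above c p q) : c < n := by
  obtain ⟨a, b, -, hb, -⟩ := h
  omega

lemma row_lt_of_lt : ∀ {p q a b c : ℕ}, p < q → a + c + 1 ≤ n → b + c + 1 ≤ n →
    P.west a c = p → P.west b c = q → (∀ r c', c' < c → ¬ P.Crosses p q r c') → a < b
  | p, q, a, b, 0, hpq, _, _, ha, hb, _ => by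
    rw [west_zero] at ha hb
    omega
  | p, q, a, b, c + 1, hpq, ha, hb, hwa, hwb, hno => by
    rw [P.west_succ_eq_west_srcRow (by omega)] at hwa hwb
    have hsrc := row_lt_of_lt hpq (P.srcRow_add_le (by omega)) (P.srcRow_add_le (by omega))
      hwa hwb fun r c' hc' => hno r c' (by omega)
    rcases lt_trichotomy a b with hab | rfl | hba
    · exact hab
    · exact absurd hsrc (lt_irrefl _)
    · rcases P.srcRow_lt_or_cross hba with h | ⟨hcr, hs⟩
      · exact absurd hsrc h.not_gt
      · rw [P.srcRow_of_cross hcr] at hwa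
        refine absurd ⟨hcr, ?_⟩ (hno a c (by omega))
        rw [P.south_eq_west_elbowFrom (P.inShape a c hcr), ← hs, hwa, hwb]

lemma Reduced.west_lt_south (hP : P.Reduced) {r c : ℕ} (h : P.cross r c = true) :
    P.west r c < P.south r c := by
  have hr := P.inShape r c h
  have hrf := P.le_elbowFrom (r + 1) c
  have hf := P.elbowFrom_add_le (r := r + 1) (c := c) (by omega)
  have hsouth := P.south_eq_west_elbowFrom hr
  rcases lt_trichotomy (P.west r c) (P.south r c) with hlt | heq | hgt
  · exact hlt
  · exact absurd (heq.trans hsouth) (P.west_ne_west (by omega) (by omega) hf)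
  · refine absurd (P.row_lt_of_lt hgt hf (by omega) hsouth.symm rfl fun r' c' hc' hx => ?_)
      (by omega)
    obtain ⟨-, rfl⟩ := hP.eq_of_crosses hx (Crosses.symm ⟨h, rfl⟩)
    omega

lemma Above.exitPipe_eq_or_above_succ {c p q : ℕ} (h : P.Above c p q)
    (hpq : ∀ r, ¬ P.Crosses p q r c) : P.exitPipe c = p ∨ P.Above (c + 1) p q := by
  obtain ⟨a, b, hab, hb, rfl, rfl⟩ := h
  by_cases ha0 : a = P.elbowFrom 0 c
  · exact .inl (by rw [exitPipe_eq, ha0])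
  refine .inr ?_
  have hb0 : b ≠ P.elbowFrom 0 c := by
    rintro rfl
    have hcr := P.cross_of_lt_elbowFrom (Nat.zero_le a) hab
    refine hpq a ⟨hcr, ?_⟩
    rw [P.south_eq_west_elbowFrom (P.inShape a c hcr), P.elbowFrom_eq_of_le (Nat.zero_le _) hab]
  obtain ⟨a', ha', rfl⟩ := P.exists_srcRow_eq (by omega) ha0
  obtain ⟨b', hb', rfl⟩ := P.exists_srcRow_eq hb hb0
  refine ⟨a', b', ?_, by omega, P.west_succ_eq_west_srcRow ha', P.west_succ_eq_west_srcRow hb'⟩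
  rcases lt_trichotomy a' b' with h | rfl | h
  · exact h
  · exact absurd hab (lt_irrefl _)
  · rcases P.srcRow_lt_or_cross h with h' | ⟨hcr, hs⟩
    · exact absurd hab h'.not_gt
    · refine absurd ⟨?_, ?_⟩ (hpq (P.srcRow a' c))
      all_goals rw [P.srcRow_of_cross hcr]
      exacts [hcr, by rw [P.south_eq_west_elbowFrom (P.inShape a' c hcr), ← hs]]

lemma exitPipe_eq_south_or_above_succ {r c : ℕ} (h : P.cross r c = true) :
    P.exitPipe c = P.south r c ∨ P.Above (c + 1) (P.south r c) (P.west r c) := by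
  have hr := P.inShape r c h
  rw [P.south_eq_west_elbowFrom hr]
  by_cases hf0 : P.elbowFrom (r + 1) c = P.elbowFrom 0 c
  · exact .inl (by rw [exitPipe_eq, hf0])
  refine .inr ?_
  obtain ⟨e, he, hef⟩ := P.exists_srcRow_eq (P.elbowFrom_add_le (by omega)) hf0
  have hecr : P.cross e c = false := by
    by_contra hecr
    rw [P.srcRow_of_cross (by simpa using hecr)] at hef
    simp [hef, P.cross_elbowFrom] at hecr
  have her : e < r := by
    rw [P.srcRow_of_elbow hecr] at hef
    rcases lt_trichotomy e r with her | rfl | hre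
    · exact her
    · simp [hecr] at h
    · have := P.le_elbowFrom (e + 1) c
      simpa [hecr] using P.cross_of_lt_elbowFrom (r := r + 1) (c := c) hre (by omega)
  refine ⟨e, r, her, by omega, ?_, ?_⟩
  · rw [P.west_succ_eq_west_srcRow he, hef]
  · rw [P.west_succ_eq_west_srcRow hr, P.srcRow_of_cross h]

/-- In a column, each elbow row is joined by an arc to the next elbow row below it. -/
lemma reflTransGen_arc_west {a e c : ℕ} (ha : P.cross a c = false) (hae : a ≤ e)
    (he : P.cross e c = false) (hn : e + c + 1 ≤ n) :
    Relation.ReflTransGen P.Arc (P.west a c) (P.west e c) := by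
  rcases hae.eq_or_lt with rfl | hlt
  · exact .refl
  have hf := P.elbowFrom_le hlt he
  have harc := P.arc_west_south (by omega) ha
  rw [P.south_eq_west_elbowFrom (by omega)] at harc
  exact .head harc
    (reflTransGen_arc_west (P.cross_elbowFrom _ _) (by omega) he hn)
termination_by e - a
decreasing_by have := P.le_elbowFrom (a + 1) c; omega

lemma exitPipe_ne_west_of_cross {r c : ℕ} (h : P.cross r c = true) :
    P.exitPipe c ≠ P.west r c := by
  have hr := P.inShape r c h
  rw [exitPipe_eq]
  refine P.west_ne_west (fun h0 => ?_) (P.elbowFrom_add_le (by omega)) (by omega)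
  simp [← h0, P.cross_elbowFrom] at h

/-- Walk from `p` down the elbows of column `c` to the last elbow above `q`: the pipe leaving
it southwards is `q` itself, or a pipe `x` crossing `q` in column `c`, which then runs above `q`
in column `c + 1` and, `P` being reduced, never crosses it again. -/
lemma Reduced.transGen_arc_of_above (hP : P.Reduced) {c p q : ℕ} (h : P.Above c p q)
    (hpq : ∀ r c', c ≤ c' → ¬ P.Crosses p q r c') : Relation.TransGen P.Arc p q := by
  have hc := h.lt
  obtain ⟨a, b, hab, hb, rfl, rfl⟩ := h
  cases ha : P.cross a c with
  | true =>
    rcases Above.exitPipe_eq_or_above_succ ⟨a, b, hab, hb, rfl, rfl⟩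
      (fun r => hpq r c le_rfl) with hexit | habove
    · exact absurd hexit (exitPipe_ne_west_of_cross ha)
    · exact hP.transGen_arc_of_above habove fun r c' hc' => hpq r c' (by omega)
  | false =>
    obtain ⟨e, hae, heb, he, hbe⟩ := P.exists_last_elbow_before ha hab
    have hpath := reflTransGen_arc_west ha hae he (by omega)
    have harc := P.arc_west_south (by omega) he
    cases hbc : P.cross b c with
    | false =>
      rw [P.south_eq_west_elbowFrom (by omega), le_antisymm (P.elbowFrom_le heb hbc) hbe] at harc
      exact .tail' hpath harc
    | true =>
      have hbn := P.inShape b c hbc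
      have hx : P.south e c = P.south b c := by
        rw [P.south_eq_west_elbowFrom (by omega), P.south_eq_west_elbowFrom hbn,
          P.elbowFrom_eq_of_le (by omega)
            (hbe.lt_of_ne (by rintro rfl; simp [P.cross_elbowFrom] at hbc))]
      have habove : P.Above (c + 1) (P.south e c) (P.west b c) :=
        ⟨e, b, heb, by omega, by simp [west_succ, he], by simp [west_succ, hbc]⟩
      refine (Relation.TransGen.tail' hpath harc).trans
        (hP.transGen_arc_of_above habove fun r c' hc' hx' => ?_)
      obtain ⟨-, rfl⟩ := hP.eq_of_crosses (hx ▸ hx') ⟨hbc, Sym2.eq_swap⟩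
      omega
termination_by n - c

lemma exitPipe_ne_west :
    ∀ {c' r c : ℕ}, c' < c → r + c + 1 ≤ n → P.exitPipe c' ≠ P.west r c
  | _, _, 0, hc, _ => absurd hc (Nat.not_lt_zero _)
  | c', r, c + 1, hc, h => by
    rw [P.west_succ_eq_west_srcRow (by omega)]
    rcases (Nat.lt_succ_iff.1 hc).lt_or_eq with hc | rfl
    · exact exitPipe_ne_west hc (P.srcRow_add_le (by omega))
    · rw [exitPipe_eq]
      exact P.west_ne_west (P.srcRow_ne_elbowFrom_zero r c').symm
        (P.elbowFrom_add_le (by omega)) (P.srcRow_add_le (by omega))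

section ExitPerm

variable {ω : Equiv.Perm (Fin n)} (hω : P.HasExitPerm ω)
include hω

lemma HasExitPerm.exitPipe_inv (p : Fin n) : P.exitPipe (ω⁻¹ p) = p := by
  rw [hω]
  simp

lemma HasExitPerm.le_inv {r c : ℕ} {p : Fin n} (h : r + c + 1 ≤ n) (hp : P.west r c = p) :
    c ≤ ω⁻¹ p := by
  by_contra! hlt
  exact exitPipe_ne_west hlt h (by rw [hω.exitPipe_inv, hp])

lemma HasExitPerm.inv_lt_of_exitPipe_eq {r c : ℕ} {p q : Fin n} (hp : P.exitPipe c = p)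
    (h : r + c + 1 ≤ n) (hq : P.west r c = q) (hpq : p ≠ q) : ω⁻¹ p < ω⁻¹ q := by
  have hc : c < n := by omega
  have hinv : ω⁻¹ p = ⟨c, hc⟩ := by
    rw [Equiv.Perm.inv_eq_iff_eq]
    exact Fin.ext (hp.symm.trans (hω ⟨c, hc⟩))
  have hne : ω⁻¹ q ≠ ⟨c, hc⟩ := hinv ▸ (ω⁻¹).injective.ne hpq.symm
  have hle := hω.le_inv h hq
  rw [Fin.lt_def, hinv]
  exact hle.lt_of_ne' (Fin.val_ne_of_ne hne)

lemma HasExitPerm.inv_lt_of_above {c : ℕ} {p q : Fin n} (h : P.Above c p q)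
    (hpq : ∀ r c', c ≤ c' → ¬ P.Crosses p q r c') : ω⁻¹ p < ω⁻¹ q := by
  have hc := h.lt
  have hne := Fin.val_injective.ne_iff.1 h.ne
  rcases h.exitPipe_eq_or_above_succ fun r => hpq r c le_rfl with hexit | habove
  · obtain ⟨-, b, -, hb, -, hq⟩ := h
    exact hω.inv_lt_of_exitPipe_eq hexit hb hq hne
  · exact inv_lt_of_above habove fun r c' hc' => hpq r c' (by omega)
termination_by n - c

end ExitPerm

lemma LinExt.inv_lt_of_transGen {π : Equiv.Perm (Fin n)} (hπ : P.LinExt π) {p q : Fin n}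
    (h : Relation.TransGen P.Arc p q) : π⁻¹ p < π⁻¹ q := by
  suffices ∀ {b : ℕ}, Relation.TransGen P.Arc p b →
      ∀ hb : b < n, π⁻¹ p < π⁻¹ ⟨b, hb⟩ from this h q.2
  intro b hpb
  induction hpb with
  | single hab => exact fun hb => hπ p ⟨_, hb⟩ hab
  | tail _ hbc ih => exact fun hc => (ih (P.lt_of_arc hbc)).trans (hπ _ ⟨_, hc⟩ hbc)

end PipeDream

theorem weakLE_of_linExt_general (n : ℕ) (ω : Equiv.Perm (Fin n)) (P : PipeDream n)
    (hred : P.Reduced) (hexit : P.HasExitPerm ω)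
    (π : Equiv.Perm (Fin n)) (hlin : P.LinExt π) :
    WeakLE π ω := by
  intro i j hij hπ
  by_cases hcross : ∃ r c, P.Crosses i j r c
  · obtain ⟨r, c, hcr, hpair⟩ := hcross
    obtain ⟨hwi, hsj⟩ : P.west r c = i ∧ P.south r c = j := by
      rcases Sym2.eq_iff.1 hpair with h | ⟨hwj, hsi⟩
      · exact h
      · have := hred.west_lt_south hcr
        simp only [hwj, hsi, Fin.val_fin_lt] at this
        exact absurd hij this.not_gt
    rcases P.exitPipe_eq_south_or_above_succ hcr with hexit_j | habove
    · exact hexit.inv_lt_of_exitPipe_eq (hexit_j.trans hsj) (by have := P.inShape r c hcr; omega)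
        hwi (ne_of_gt hij)
    · rw [hsj, hwi] at habove
      refine hexit.inv_lt_of_above habove fun r' c' hc' h' => ?_
      obtain ⟨-, rfl⟩ := hred.eq_of_crosses h'.symm ⟨hcr, hpair⟩
      omega
  · simp only [not_exists] at hcross
    have habove : P.Above 0 i j := ⟨i, j, hij, by omega, P.west_zero i, P.west_zero j⟩
    exact absurd (hlin.inv_lt_of_transGen
      (hred.transGen_arc_of_above habove fun r c _ => hcross r c)) hπ.not_gt

/-- If `P ∈ Π(ω)` is an acyclic reduced pipe dream and `π ∈ S_n` is a
linear extension of `P`, then `π ≤ ω` in the weak order. -/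
theorem weakLE_of_linExt (n : ℕ) (ω : Equiv.Perm (Fin n)) (P : PipeDream n)
    (hred : P.Reduced) (hexit : P.HasExitPerm ω) (hacyclic : P.Acyclic)
    (π : Equiv.Perm (Fin n)) (hlin : P.LinExt π) :
    WeakLE π ω :=
  weakLE_of_linExt_general n ω P hred hexit π hlin
end

section
/- If π ≤ ω in the weak order on S_n, then π is a linear extension of exactly one acyclic reduced pipe dream P ∈ Π(ω): such a P exists and is unique. -/
/-!
Read column by column, a pipe dream turns the word of pipes present in a column into the next
one: the pipe at the first elbow exits, every later elbow lifts the pipe of the next elbow, and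
crossings keep their pipe. In a reduced pipe dream `P ∈ Π(ω)` with linear extension `π`, the
pipe `ω c` exits column `c` at its row of the word, and the elbows below that row are forced to
be the suffix minima of the word for the order `π`: consecutive elbows are joined by arcs, and
below the first elbow the south pipe of a crossing reaches its west pipe in the contact graph.
This determines `P` column by column, so the greedy pipe dream built by this rule is the only
candidate. When `π ≤ ω`, each of its crossings brings the smaller pipe from the west, so no two
pipes cross twice, and its arcs increase along `π`.
-/

namespace PipeDream

variable {n : ℕ}

section Columns

variable (P : PipeDream n)

lemma pipes_eq (r c : ℕ) :
    P.pipes r c =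
      (if c = 0 then r
        else if P.cross r (c - 1) then (P.pipes r (c - 1)).1 else (P.pipes r (c - 1)).2,
       if r + c + 2 ≤ n then
          if P.cross (r + 1) c then (P.pipes (r + 1) c).2 else (P.pipes (r + 1) c).1
        else 0) := by
  rw [pipes]
  simp only [dite_eq_ite]

/-- Column `c` is read as the word `P.word c 0, …, P.word c (n - c - 1)`. -/
def word (c s : ℕ) : ℕ := P.west s c

lemma word_zero (s : ℕ) : P.word 0 s = s := by
  simp [word, west, P.pipes_eq s 0]

lemma word_succ (c s : ℕ) :
    P.word (c + 1) s = if P.cross s c then P.word c s else P.south s c := by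
  simp [word, west, south, P.pipes_eq s (c + 1)]

lemma south_eq_ite (c s : ℕ) (h : s + c + 2 ≤ n) :
    P.south s c = if P.cross (s + 1) c then P.south (s + 1) c else P.word c (s + 1) := by
  conv_lhs => rw [south, pipes_eq]
  simp [h, south, word, west]

lemma cross_eq_false_of_not_le {s c : ℕ} (h : ¬ s + c + 2 ≤ n) : P.cross s c = false := by
  by_contra hc
  exact h (P.inShape s c (by simpa using hc))

lemma pipes_congr (Q : PipeDream n) {s c : ℕ}
    (hPQ : ∀ t c', c' ≤ c → P.cross t c' = Q.cross t c') : P.pipes s c = Q.pipes s c := by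
  induction s, c using pipes.induct (n := n) with
  | case1 s c ih₁ ih₂ =>
    have hleft : c ≠ 0 → P.pipes s (c - 1) = Q.pipes s (c - 1) :=
      fun hc => ih₁ hc fun t c' h => hPQ t c' (by omega)
    have hbelow : s + c + 2 ≤ n → P.pipes (s + 1) c = Q.pipes (s + 1) c :=
      fun hs => ih₂ hs hPQ
    rw [P.pipes_eq, Q.pipes_eq]
    congr 1
    · split_ifs with hc <;> simp_all [hPQ s (c - 1) (by omega)]
    · split_ifs with hs <;> simp_all [hPQ (s + 1) c le_rfl]

lemma word_congr (Q : PipeDream n) {c : ℕ}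
    (hPQ : ∀ t c', c' < c → P.cross t c' = Q.cross t c') : P.word c = Q.word c := by
  funext s
  cases c with
  | zero => rw [P.word_zero, Q.word_zero]
  | succ c =>
    rw [P.word_succ, Q.word_succ, hPQ s c (by omega)]
    simp only [word, west, south, P.pipes_congr Q (c := c) fun t c' h => hPQ t c' (by omega)]

end Columns

section Elbows

variable (P : PipeDream n)

lemma exists_elbow_gt (c s : ℕ) : ∃ t, s < t ∧ P.cross t c = false :=
  ⟨s + n + 1, by omega, P.cross_eq_false_of_not_le (by omega)⟩

lemma exists_elbow (c : ℕ) : ∃ t, P.cross t c = false :=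
  ⟨n, P.cross_eq_false_of_not_le (by omega)⟩

def nextElbow (c s : ℕ) : ℕ := Nat.find (P.exists_elbow_gt c s)

def firstElbow (c : ℕ) : ℕ := Nat.find (P.exists_elbow c)

/-- Junk `0` if column `c` has no elbow above row `s`. -/
def prevElbow (c s : ℕ) : ℕ := Nat.findGreatest (fun e => P.cross e c = false) (s - 1)

variable {P}

lemma lt_nextElbow (c s : ℕ) : s < P.nextElbow c s :=
  (Nat.find_spec (P.exists_elbow_gt c s)).1

lemma cross_nextElbow (c s : ℕ) : P.cross (P.nextElbow c s) c = false :=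
  (Nat.find_spec (P.exists_elbow_gt c s)).2

lemma cross_of_lt_nextElbow {c s t : ℕ} (h₁ : s < t) (h₂ : t < P.nextElbow c s) :
    P.cross t c = true := by
  simpa [h₁] using Nat.find_min (P.exists_elbow_gt c s) h₂

lemma nextElbow_le {c s t : ℕ} (h₁ : s < t) (h₂ : P.cross t c = false) :
    P.nextElbow c s ≤ t :=
  Nat.find_le ⟨h₁, h₂⟩

lemma nextElbow_eq {c s t : ℕ} (h₁ : s < t) (h₂ : P.cross t c = false)
    (h₃ : ∀ u, s < u → u < t → P.cross u c = true) : P.nextElbow c s = t := by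
  refine le_antisymm (nextElbow_le h₁ h₂) (not_lt.1 fun hlt => ?_)
  simpa [cross_nextElbow] using h₃ _ (lt_nextElbow c s) hlt

lemma nextElbow_lt {c s : ℕ} (h : s + c + 2 ≤ n) : P.nextElbow c s < n - c :=
  lt_of_le_of_lt (nextElbow_le (t := n - c - 1) (by omega) (P.cross_eq_false_of_not_le (by omega)))
    (by omega)

lemma cross_firstElbow (c : ℕ) : P.cross (P.firstElbow c) c = false :=
  Nat.find_spec (P.exists_elbow c)

lemma cross_of_lt_firstElbow {c t : ℕ} (h : t < P.firstElbow c) : P.cross t c = true := by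
  simpa using Nat.find_min (P.exists_elbow c) h

lemma firstElbow_le {c t : ℕ} (h : P.cross t c = false) : P.firstElbow c ≤ t :=
  Nat.find_le h

lemma nextElbow_eq_firstElbow {c s : ℕ} (h : s < P.firstElbow c) :
    P.nextElbow c s = P.firstElbow c :=
  nextElbow_eq h (cross_firstElbow c) fun _ _ hu => cross_of_lt_firstElbow hu

lemma firstElbow_lt {c : ℕ} (h : c < n) : P.firstElbow c < n - c :=
  lt_of_le_of_lt (firstElbow_le (P.cross_eq_false_of_not_le (s := n - c - 1) (by omega)))
    (by omega)

lemma prevElbow_spec {c s : ℕ} (h₁ : P.firstElbow c < s) (h₂ : P.cross s c = false) :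
    P.cross (P.prevElbow c s) c = false ∧ P.prevElbow c s < s ∧
      P.nextElbow c (P.prevElbow c s) = s := by
  have hspec : P.cross (P.prevElbow c s) c = false :=
    Nat.findGreatest_spec (P := fun e => P.cross e c = false) (m := P.firstElbow c)
      (by omega) (cross_firstElbow c)
  have hlt : P.prevElbow c s < s := by
    have := Nat.findGreatest_le (P := fun e => P.cross e c = false) (s - 1); unfold prevElbow; omega
  refine ⟨hspec, hlt, nextElbow_eq hlt h₂ fun u hu₁ hu₂ => ?_⟩
  by_contra hu
  exact Nat.findGreatest_is_greatest (P := fun e => P.cross e c = false) hu₁ (by omega)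
    (by simpa using hu)

lemma south_eq_word_nextElbow {s c : ℕ} (h : s + c + 2 ≤ n) :
    P.south s c = P.word c (P.nextElbow c s) := by
  induction h' : n - s generalizing s with
  | zero => omega
  | succ k ih =>
    rw [P.south_eq_ite c s h]
    split_ifs with hcr
    · rw [ih (P.inShape _ _ hcr) (by omega)]
      congr 1
      refine (nextElbow_eq (lt_of_lt_of_le (Nat.lt_succ_self s) (lt_nextElbow c (s + 1)).le)
        (cross_nextElbow c (s + 1)) fun u hu₁ hu₂ => ?_).symm
      rcases Nat.lt_or_ge (s + 1) u with hu | hu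
      · exact cross_of_lt_nextElbow hu hu₂
      · rwa [show u = s + 1 by omega]
    · rw [nextElbow_eq (Nat.lt_succ_self s) (by simpa using hcr) fun u h₁ h₂ => by omega]

lemma exitPipe_eq_word_firstElbow (c : ℕ) : P.exitPipe c = P.word c (P.firstElbow c) := by
  rw [exitPipe]
  split_ifs with h
  · rw [P.south_eq_word_nextElbow (P.inShape _ _ h)]
    congr 1
    have hpos : 0 < P.firstElbow c :=
      Nat.pos_of_ne_zero fun h0 => by simpa [h0, h] using cross_firstElbow (P := P) c
    exact nextElbow_eq_firstElbow hpos
  · rw [Nat.le_zero.1 (firstElbow_le (by simpa using h))]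
    rfl

end Elbows

section Source

variable {P : PipeDream n}

variable (P) in
/-- The row of column `c` whose pipe leaves column `c` in row `s`. -/
def source (c s : ℕ) : ℕ := if P.cross s c then s else P.nextElbow c s

lemma word_succ_eq_word_source {c s : ℕ} (h : s + c + 2 ≤ n) :
    P.word (c + 1) s = P.word c (P.source c s) := by
  rw [word_succ, source]
  split_ifs with hc
  · rfl
  · exact P.south_eq_word_nextElbow h

lemma le_source (c s : ℕ) : s ≤ P.source c s := by
  unfold source; split_ifs
  exacts [le_rfl, (lt_nextElbow c s).le]

lemma source_lt {c s : ℕ} (h : s + c + 2 ≤ n) : P.source c s < n - c := by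
  unfold source; split_ifs
  exacts [by omega, nextElbow_lt h]

lemma source_eq_of_cross {c s : ℕ} (h : P.cross s c = true) : P.source c s = s := by
  simp [source, h]

lemma source_eq_of_not_cross {c s : ℕ} (h : P.cross s c = false) :
    P.source c s = P.nextElbow c s := by
  simp [source, h]

lemma source_eq_self_of_cross_source {c s : ℕ} (h : P.cross (P.source c s) c = true) :
    P.source c s = s := by
  cases hs : P.cross s c
  · rw [source_eq_of_not_cross hs] at h ⊢
    simp [cross_nextElbow] at h
  · exact source_eq_of_cross hs

lemma source_injective (c : ℕ) : Function.Injective (P.source c) := by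
  intro s s' h
  wlog hlt : s < s' generalizing s s'
  · rcases Nat.lt_or_ge s' s with h' | h'
    · exact (this h.symm h').symm
    · omega
  have hs : P.cross s c = false := by
    by_contra hc
    have := le_source (P := P) c s'
    rw [source_eq_of_cross (by simpa using hc)] at h
    omega
  rw [source_eq_of_not_cross hs] at h
  cases hs' : P.cross s' c
  · rw [source_eq_of_not_cross hs'] at h
    have := nextElbow_le hlt hs'
    have := lt_nextElbow (P := P) c s'
    omega
  · rw [source_eq_of_cross hs'] at h
    rw [← h, cross_nextElbow] at hs'
    cases hs'

lemma source_ne_firstElbow (c s : ℕ) : P.source c s ≠ P.firstElbow c := by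
  unfold source; split_ifs with hc
  · rintro rfl; simp [cross_firstElbow] at hc
  · have := firstElbow_le (P := P) (c := c) (by simpa using hc)
    have := lt_nextElbow (P := P) c s
    omega

lemma exists_source_eq {c s : ℕ} (h₁ : s < n - c) (h₂ : s ≠ P.firstElbow c) :
    ∃ u, u + c + 2 ≤ n ∧ P.source c u = s := by
  cases hc : P.cross s c
  · obtain ⟨he, hlt, hnext⟩ :=
      prevElbow_spec (lt_of_le_of_ne (firstElbow_le hc) (Ne.symm h₂)) hc
    exact ⟨P.prevElbow c s, by omega, by rw [source_eq_of_not_cross he, hnext]⟩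
  · exact ⟨s, P.inShape _ _ hc, source_eq_of_cross hc⟩

lemma cross_of_source_lt_source {c s s' : ℕ} (h : s < s') (hgt : P.source c s' < P.source c s) :
    P.cross s' c = true ∧ P.source c s' = s' ∧ P.nextElbow c s' = P.source c s ∧
      P.firstElbow c < s' := by
  have hle := le_source (P := P) c s'
  have hs : P.cross s c = false := by
    by_contra hc
    rw [source_eq_of_cross (s := s) (by simpa using hc)] at hgt
    omega
  rw [source_eq_of_not_cross hs] at hgt ⊢
  have hs' : P.cross s' c = true := by
    by_contra hc
    rw [source_eq_of_not_cross (by simpa using hc)] at hgt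
    have := nextElbow_le h (by simpa using hc)
    have := lt_nextElbow (P := P) c s'
    omega
  rw [source_eq_of_cross hs'] at hgt ⊢
  have hnext : P.nextElbow c s' = P.nextElbow c s :=
    nextElbow_eq hgt (cross_nextElbow c s) fun _ hu₁ hu₂ =>
      cross_of_lt_nextElbow (by omega) hu₂
  refine ⟨hs', rfl, hnext, lt_of_not_ge fun hle => ?_⟩
  rcases hle.eq_or_lt with rfl | hlt
  · simp [cross_firstElbow] at hs'
  · exact source_ne_firstElbow c s (by
      rw [source_eq_of_not_cross hs, ← hnext, nextElbow_eq_firstElbow hlt])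

/-- After a crossing below the first elbow, its south pipe runs above its west pipe. -/
lemma exists_word_succ_eq_south {c t : ℕ} (hct : P.cross t c = true) (ht : P.firstElbow c < t) :
    ∃ e < t, P.word (c + 1) e = P.south t c ∧ P.word (c + 1) t = P.west t c := by
  have hb := P.inShape t c hct
  have hlt := lt_nextElbow (P := P) c t
  have hnb := nextElbow_lt (P := P) hb
  obtain ⟨he, hlt', hnext⟩ := prevElbow_spec (by omega) (cross_nextElbow (P := P) c t)
  refine ⟨P.prevElbow c (P.nextElbow c t), not_le.1 fun hle => ?_, ?_, ?_⟩
  · rcases hle.eq_or_lt with heq | hlt''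
    · rw [← heq, hct] at he; cases he
    · rw [cross_of_lt_nextElbow hlt'' hlt'] at he; cases he
  · rw [word_succ_eq_word_source (by omega), source_eq_of_not_cross he, hnext,
      south_eq_word_nextElbow hb]
  · rw [word_succ_eq_word_source hb, source_eq_of_cross hct]
    rfl

lemma word_lt {c s : ℕ} (h : s < n - c) : P.word c s < n := by
  induction c generalizing s with
  | zero => rw [word_zero]; omega
  | succ c ih =>
    rw [word_succ_eq_word_source (by omega)]
    exact ih (source_lt (by omega))

lemma word_injOn {c s s' : ℕ} (hs : s < n - c) (hs' : s' < n - c)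
    (h : P.word c s = P.word c s') : s = s' := by
  induction c generalizing s s' with
  | zero => rwa [word_zero, word_zero] at h
  | succ c ih =>
    rw [word_succ_eq_word_source (by omega), word_succ_eq_word_source (by omega)] at h
    exact source_injective c (ih (source_lt (by omega)) (source_lt (by omega)) h)

lemma exists_word_eq_iff {c : ℕ} (hc : c < n) (v : ℕ) :
    (∃ s < n - c, P.word c s = v) ↔ v < n ∧ ∀ c' < c, P.exitPipe c' ≠ v := by
  induction c with
  | zero => simp [word_zero]
  | succ c ih =>
    have hfirst := firstElbow_lt (P := P) (c := c) (by omega)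
    have hstep : (∃ s < n - (c + 1), P.word (c + 1) s = v) ↔
        (∃ s < n - c, P.word c s = v) ∧ P.exitPipe c ≠ v := by
      rw [exitPipe_eq_word_firstElbow]
      constructor
      · rintro ⟨s, hs, rfl⟩
        rw [word_succ_eq_word_source (by omega)]
        exact ⟨⟨_, source_lt (by omega), rfl⟩, fun h =>
          source_ne_firstElbow c s (word_injOn (source_lt (by omega)) hfirst h.symm)⟩
      · rintro ⟨⟨s, hs, rfl⟩, hne⟩
        obtain ⟨u, hu, rfl⟩ := exists_source_eq hs fun h => hne (by rw [h])
        exact ⟨u, by omega, word_succ_eq_word_source hu⟩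
    rw [hstep, ih (by omega), Nat.forall_lt_succ_right, and_assoc]

end Source

section ContactGraph

variable {P : PipeDream n}

lemma arc_of_elbow {c s : ℕ} (h₁ : s + c + 2 ≤ n) (h₂ : P.cross s c = false) :
    P.Arc (P.word c s) (P.word c (P.nextElbow c s)) :=
  ⟨s, c, h₁, h₂, rfl, P.south_eq_word_nextElbow h₁⟩

lemma arc_lt {i j : ℕ} (h : P.Arc i j) : i < n ∧ j < n := by
  obtain ⟨s, c, hs, -, rfl, rfl⟩ := h
  rw [south_eq_word_nextElbow hs]
  exact ⟨word_lt (by omega), word_lt (nextElbow_lt hs)⟩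

lemma transGen_arc_of_elbows {c e e' : ℕ} (he : P.cross e c = false) (he' : P.cross e' c = false)
    (hlt : e < e') (hb : e' < n - c) : Relation.TransGen P.Arc (P.word c e) (P.word c e') := by
  have harc := arc_of_elbow (by omega) he
  rcases (nextElbow_le hlt he').eq_or_lt with heq | hlt'
  · exact heq ▸ .single harc
  · exact .head harc (transGen_arc_of_elbows (cross_nextElbow c e) he' hlt' hb)
termination_by e' - e
decreasing_by have := lt_nextElbow (P := P) c e; omega

/-- The position of pipe `v` in `π`; the junk value for `v ≥ n` keeps `rank π` injective. -/
def rank (π : Equiv.Perm (Fin n)) (v : ℕ) : ℕ :=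
  if h : v < n then π⁻¹ ⟨v, h⟩ else v + n

lemma rank_injective (π : Equiv.Perm (Fin n)) : Function.Injective (rank π) := by
  intro u v h
  unfold rank at h
  split_ifs at h with hu hv hv
  · exact congrArg Fin.val (π⁻¹.injective (Fin.ext h))
  · have := (π⁻¹ ⟨u, hu⟩).isLt; omega
  · have := (π⁻¹ ⟨v, hv⟩).isLt; omega
  · omega

lemma rank_lt_rank_iff (π : Equiv.Perm (Fin n)) (u v : Fin n) :
    rank π u < rank π v ↔ π⁻¹ u < π⁻¹ v := by
  rw [rank, rank, dif_pos u.isLt, dif_pos v.isLt]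
  exact Fin.lt_def.symm

variable {π : Equiv.Perm (Fin n)}

lemma LinExt.rank_lt (hlin : P.LinExt π) {i j : ℕ} (h : P.Arc i j) : rank π i < rank π j := by
  obtain ⟨hi, hj⟩ := arc_lt h
  exact (rank_lt_rank_iff π ⟨i, hi⟩ ⟨j, hj⟩).2 (hlin ⟨i, hi⟩ ⟨j, hj⟩ h)

lemma LinExt.rank_lt_of_transGen (hlin : P.LinExt π) {i j : ℕ}
    (h : Relation.TransGen P.Arc i j) : rank π i < rank π j := by
  induction h with
  | single h => exact hlin.rank_lt h
  | tail _ h ih => exact ih.trans (hlin.rank_lt h)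

lemma LinExt.acyclic (hlin : P.LinExt π) : P.Acyclic :=
  fun _ h => (hlin.rank_lt_of_transGen h).false

end ContactGraph

section Crossings

variable {P : PipeDream n}

variable (P) in
def CrossesIn (c u v : ℕ) : Prop :=
  ∃ t, P.cross t c = true ∧ P.west t c = u ∧ P.south t c = v

lemma crossesIn_iff_source_lt {c s s' : ℕ} (hss : s < s') (hs' : s' + c + 2 ≤ n) :
    (P.CrossesIn c (P.word (c + 1) s') (P.word (c + 1) s) ↔ P.source c s' < P.source c s) ∧
      ¬ P.CrossesIn c (P.word (c + 1) s) (P.word (c + 1) s') := by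
  have hs : s + c + 2 ≤ n := by omega
  rw [word_succ_eq_word_source hs, word_succ_eq_word_source hs']
  have hrows : ∀ {a b}, a < n - c → b < n - c → P.CrossesIn c (P.word c a) (P.word c b) →
      P.cross a c = true ∧ P.nextElbow c a = b := by
    rintro a b ha hb ⟨t, hct, hw, hs⟩
    have ht := P.inShape t c hct
    obtain rfl : t = a := word_injOn (by omega) ha hw
    rw [south_eq_word_nextElbow ht] at hs
    exact ⟨hct, word_injOn (nextElbow_lt ht) hb hs⟩
  refine ⟨⟨fun h => ?_, fun h => ?_⟩, fun h => ?_⟩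
  · obtain ⟨-, hnext⟩ := hrows (source_lt hs') (source_lt hs) h
    exact hnext ▸ lt_nextElbow c _
  · obtain ⟨hct, hself, hnext, -⟩ := cross_of_source_lt_source hss h
    exact ⟨s', hct, by rw [hself]; rfl, by rw [south_eq_word_nextElbow hs', hnext]⟩
  · obtain ⟨hct, hnext⟩ := hrows (source_lt hs) (source_lt hs') h
    rw [source_eq_self_of_cross_source hct] at hnext
    cases hc' : P.cross s' c
    · rw [source_eq_of_not_cross hc'] at hnext
      have := nextElbow_le hss hc'
      have := lt_nextElbow (P := P) c s'
      omega
    · rw [source_eq_of_cross hc'] at hnext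
      rw [← hnext, cross_nextElbow] at hc'
      cases hc'

lemma word_lt_word_iff_crossesIn {c s s' : ℕ}
    (hinc : ∀ c' < c, ∀ t, P.cross t c' = true → P.west t c' < P.south t c')
    (hss : s < s') (hs' : s' < n - c) :
    (P.word c s' < P.word c s ↔ ∃ c' < c, P.CrossesIn c' (P.word c s') (P.word c s)) ∧
      ¬ ∃ c' < c, P.CrossesIn c' (P.word c s) (P.word c s') := by
  induction c generalizing s s' with
  | zero => simpa [word_zero] using hss.le
  | succ c ih =>
    have hinc' : ∀ c' < c, ∀ t, P.cross t c' = true → P.west t c' < P.south t c' :=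
      fun c' h => hinc c' (by omega)
    obtain ⟨hstep, hnot⟩ := crossesIn_iff_source_lt (P := P) (c := c) hss (by omega)
    simp only [Nat.exists_lt_succ_right]
    rw [word_succ_eq_word_source (by omega), word_succ_eq_word_source (by omega)] at hstep hnot ⊢
    rcases lt_or_gt_of_ne ((source_injective (P := P) c).ne hss.ne) with hlt | hgt
    · obtain ⟨ih₁, ih₂⟩ := ih hinc' hlt (source_lt (by omega))
      exact ⟨by rw [ih₁, or_iff_left fun h => (hstep.1 h).not_gt hlt],
        not_or.2 ⟨ih₂, hnot⟩⟩
    · have hcross := hstep.2 hgt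
      have hlt : P.word c (P.source c s') < P.word c (P.source c s) := by
        obtain ⟨t, hct, hw, hs⟩ := hcross
        exact hw ▸ hs ▸ hinc c (by omega) t hct
      obtain ⟨ih₁, -⟩ := ih hinc' hgt (source_lt (by omega))
      exact ⟨iff_of_true hlt (Or.inr hcross),
        not_or.2 ⟨fun h => (ih₁.2 h).not_gt hlt, hnot⟩⟩

lemma not_crossesIn_of_lt_of_west_lt_south
    (hinc : ∀ t c, P.cross t c = true → P.west t c < P.south t c) {t c c' : ℕ}
    (hc' : c' < c) (hct : P.cross t c = true) :
    ¬ P.CrossesIn c' (P.west t c) (P.south t c) ∧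
      ¬ P.CrossesIn c' (P.south t c) (P.west t c) := by
  have hb := P.inShape t c hct
  have hws := hinc t c hct
  rw [south_eq_word_nextElbow hb] at hws ⊢
  obtain ⟨h₁, h₂⟩ := word_lt_word_iff_crossesIn (fun c' _ t ht => hinc t c' ht)
    (lt_nextElbow c t) (nextElbow_lt hb)
  exact ⟨fun h => h₂ ⟨c', hc', h⟩, fun h => (h₁.2 ⟨c', hc', h⟩).not_gt hws⟩

lemma reduced_of_west_lt_south (hinc : ∀ t c, P.cross t c = true → P.west t c < P.south t c) :
    P.Reduced := by
  intro r c r' c' hr hr' hne hsame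
  rcases lt_trichotomy c c' with hlt | rfl | hlt
  · obtain ⟨h₁, h₂⟩ := not_crossesIn_of_lt_of_west_lt_south hinc hlt hr'
    rcases hsame with ⟨hw, hs⟩ | ⟨hw, hs⟩
    exacts [h₁ ⟨r, hr, hw, hs⟩, h₂ ⟨r, hr, hw, hs⟩]
  · have hb' := P.inShape r' c hr'
    rcases hsame with ⟨hw, -⟩ | ⟨hw, -⟩
    · exact hne (by rw [word_injOn (c := c) (by have := P.inShape r c hr; omega) (by omega) hw])
    · rw [south_eq_word_nextElbow hb'] at hw
      have := word_injOn (by have := P.inShape r c hr; omega) (nextElbow_lt hb') hw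
      rw [this, cross_nextElbow] at hr
      cases hr
  · obtain ⟨h₁, h₂⟩ := not_crossesIn_of_lt_of_west_lt_south hinc hlt hr
    rcases hsame with ⟨hw, hs⟩ | ⟨hw, hs⟩
    exacts [h₁ ⟨r', hr', hw.symm, hs.symm⟩, h₂ ⟨r', hr', hs.symm, hw.symm⟩]

lemma Reduced.not_crossesIn (hred : P.Reduced) {t c c' : ℕ} (hct : P.cross t c = true)
    (hc : c ≠ c') :
    ¬ P.CrossesIn c' (P.south t c) (P.west t c) ∧
      ¬ P.CrossesIn c' (P.west t c) (P.south t c) := by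
  constructor <;> rintro ⟨t', ht', hw, hs⟩ <;> refine hred t c t' c' hct ht' (by simp [hc]) ?_
  exacts [.inr ⟨hs.symm, hw.symm⟩, .inl ⟨hw.symm, hs.symm⟩]

lemma transGen_arc_of_not_crossesIn (hred : P.Reduced) {d s s' : ℕ} (hss : s < s')
    (hs' : s' < n - d)
    (hnc : ∀ c ≥ d, ¬ P.CrossesIn c (P.word d s) (P.word d s') ∧
      ¬ P.CrossesIn c (P.word d s') (P.word d s)) :
    Relation.TransGen P.Arc (P.word d s) (P.word d s') := by
  by_cases hs : s = P.firstElbow d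
  · -- follow the elbows down to the south pipe of the crossing at `s'`, which then runs above
    -- the pipe at `s'`
    subst hs
    cases hcs' : P.cross s' d
    · exact transGen_arc_of_elbows (cross_firstElbow d) hcs' hss hs'
    · have hb' := P.inShape _ _ hcs'
      obtain ⟨e, he, hwe, hws'⟩ := exists_word_succ_eq_south hcs' hss
      have hafter := transGen_arc_of_not_crossesIn (d := d + 1) hred he (by omega) fun c hc => by
        rw [hwe, hws']; exact hred.not_crossesIn hcs' (by omega)
      rw [hwe, hws', south_eq_word_nextElbow hb'] at hafter
      exact (transGen_arc_of_elbows (cross_firstElbow d) (cross_nextElbow d s')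
        (hss.trans (lt_nextElbow d s')) (nextElbow_lt hb')).trans hafter
  · have hs'f : s' ≠ P.firstElbow d := by
      rintro rfl
      have hcs := cross_of_lt_firstElbow hss
      refine (hnc d le_rfl).1 ⟨s, hcs, rfl, ?_⟩
      rw [south_eq_word_nextElbow (P.inShape _ _ hcs), nextElbow_eq_firstElbow hss]
    -- both pipes reach column `d + 1`, in the same order since they do not cross in column `d`
    obtain ⟨u, hu, rfl⟩ := exists_source_eq (by omega) hs
    obtain ⟨u', hu', rfl⟩ := exists_source_eq hs' hs'f
    have huu : u < u' := by
      rcases lt_trichotomy u u' with h | rfl | h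
      · exact h
      · exact absurd hss (lt_irrefl _)
      · have := (crossesIn_iff_source_lt h hu).1.2 hss
        rw [word_succ_eq_word_source hu, word_succ_eq_word_source hu'] at this
        exact absurd this (hnc d le_rfl).1
    rw [← word_succ_eq_word_source hu, ← word_succ_eq_word_source hu'] at hnc ⊢
    exact transGen_arc_of_not_crossesIn (d := d + 1) hred huu (by omega)
      fun c hc => hnc c (by omega)
termination_by n - d

/-- After the crossing, the south pipe runs above the west pipe and, by reducedness, never
crosses it again. -/
lemma transGen_arc_south_west (hred : P.Reduced) {c t : ℕ} (hct : P.cross t c = true)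
    (ht : P.firstElbow c < t) : Relation.TransGen P.Arc (P.south t c) (P.west t c) := by
  obtain ⟨e, he, hwe, hwt⟩ := exists_word_succ_eq_south hct ht
  rw [← hwe, ← hwt]
  exact transGen_arc_of_not_crossesIn (d := c + 1) hred he (by have := P.inShape t c hct; omega)
    fun c' hc' => by rw [hwe, hwt]; exact hred.not_crossesIn hct (by omega)

end Crossings

section SuffixMin

variable {π : Equiv.Perm (Fin n)}

variable (π) in
def IsSuffixMin (c : ℕ) (w : ℕ → ℕ) (r : ℕ) : Prop :=
  ∀ r' < n - c, r < r' → rank π (w r) < rank π (w r')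

instance (π : Equiv.Perm (Fin n)) (c : ℕ) (w : ℕ → ℕ) :
    DecidablePred (IsSuffixMin π c w) :=
  fun _ => by unfold IsSuffixMin; infer_instance

variable {P : PipeDream n}

variable (π P) in
lemma exists_isSuffixMin_le (c t : ℕ) (ht : t + 1 < n - c) :
    ∃ m, t < m ∧ m < n - c ∧ IsSuffixMin π c (P.word c) m ∧
      ∀ r, t < r → r < n - c → rank π (P.word c m) ≤ rank π (P.word c r) := by
  obtain ⟨m, hm, hmin⟩ := Finset.exists_min_image (Finset.Ioo t (n - c))
    (fun r => rank π (P.word c r)) ⟨t + 1, Finset.mem_Ioo.2 ⟨by omega, ht⟩⟩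
  rw [Finset.mem_Ioo] at hm
  have hle : ∀ r, t < r → r < n - c → rank π (P.word c m) ≤ rank π (P.word c r) :=
    fun r h₁ h₂ => hmin r (Finset.mem_Ioo.2 ⟨h₁, h₂⟩)
  refine ⟨m, hm.1, hm.2, fun r' hr' hmr' => lt_of_le_of_ne (hle r' (by omega) hr') fun h => ?_,
    hle⟩
  exact hmr'.ne (word_injOn hm.2 hr' (rank_injective π h))

lemma rank_south_lt_rank_west_of_isSuffixMin {c t : ℕ}
    (hmin : ∀ r, P.firstElbow c < r → r + c + 2 ≤ n →
      (P.cross r c = false ↔ IsSuffixMin π c (P.word c) r))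
    (hct : P.cross t c = true) (ht : P.firstElbow c < t) :
    rank π (P.south t c) < rank π (P.west t c) := by
  have hb := P.inShape t c hct
  obtain ⟨r₀, hr₀, hr₀t, hrank⟩ :
      ∃ r₀ < n - c, t < r₀ ∧ rank π (P.word c r₀) ≤ rank π (P.word c t) := by
    simpa [IsSuffixMin] using mt (hmin t ht hb).2 (by simp [hct])
  obtain ⟨m, htm, hm, hsm, hle⟩ := exists_isSuffixMin_le π P c t (by omega)
  have hmt : rank π (P.word c m) < rank π (P.word c t) :=
    lt_of_le_of_ne ((hle r₀ hr₀t hr₀).trans hrank) fun h =>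
      htm.ne' (word_injOn hm (by omega) (rank_injective π h))
  have hcm : P.cross m c = false := by
    by_cases hbm : m + c + 2 ≤ n
    · exact (hmin m (by omega) hbm).2 hsm
    · exact P.cross_eq_false_of_not_le hbm
  rw [south_eq_word_nextElbow hb]
  refine lt_of_le_of_lt ?_ hmt
  rcases (nextElbow_le htm hcm).eq_or_lt with heq | hlt
  · rw [heq]
  · exact ((hmin _ (ht.trans (lt_nextElbow c t)) (by omega)).1 (cross_nextElbow c t) m hm hlt).le

lemma cross_eq_false_iff_isSuffixMin (hred : P.Reduced) (hlin : P.LinExt π) {c t : ℕ}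
    (ht : P.firstElbow c < t) (hb : t + c + 2 ≤ n) :
    P.cross t c = false ↔ IsSuffixMin π c (P.word c) t := by
  have hdec : ∀ r, P.firstElbow c < r → P.cross r c = true →
      rank π (P.word c (P.nextElbow c r)) < rank π (P.word c r) := fun r hr hcr => by
    rw [← south_eq_word_nextElbow (P.inShape r c hcr)]
    exact hlin.rank_lt_of_transGen (transGen_arc_south_west hred hcr hr)
  constructor
  · intro hct r₀ hr₀ htr₀
    by_contra hge
    obtain ⟨m, htm, hm, -, hle⟩ := exists_isSuffixMin_le π P c t (by omega)
    have hmr₀ := hle r₀ htr₀ hr₀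
    cases hcm : P.cross m c
    · have := hlin.rank_lt_of_transGen (transGen_arc_of_elbows hct hcm htm hm)
      omega
    · have hbm := P.inShape m c hcm
      have := hle (P.nextElbow c m) (htm.trans (lt_nextElbow c m)) (nextElbow_lt hbm)
      have := hdec m (by omega) hcm
      omega
  · intro hsm
    cases hct : P.cross t c
    · rfl
    · have := hsm (P.nextElbow c t) (nextElbow_lt hb) (lt_nextElbow c t)
      have := hdec t ht hct
      omega

end SuffixMin

section Greedy

def rowOf (n c : ℕ) (w : ℕ → ℕ) (x : ℕ) : ℕ :=
  if h : ∃ s < n - c, w s = x then Nat.find h else 0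

lemma rowOf_spec {c : ℕ} {w : ℕ → ℕ} {x : ℕ} (h : ∃ s < n - c, w s = x) :
    rowOf n c w x < n - c ∧ w (rowOf n c w x) = x := by
  rw [rowOf, dif_pos h]
  exact Nat.find_spec h

lemma rowOf_lt {c : ℕ} (hc : c < n) (w : ℕ → ℕ) (x : ℕ) : rowOf n c w x < n - c := by
  unfold rowOf
  split_ifs with h
  exacts [(Nat.find_spec h).1, by omega]

def greedyCross (π : Equiv.Perm (Fin n)) (c : ℕ) (w : ℕ → ℕ) (x r : ℕ) : Bool :=
  decide (r + c + 2 ≤ n ∧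
    ¬ (r = rowOf n c w x ∨ (rowOf n c w x < r ∧ IsSuffixMin π c w r)))

def exitLabel (ω : Equiv.Perm (Fin n)) (c : ℕ) : ℕ := if h : c < n then ω ⟨c, h⟩ else 0

/-- Column `c` is computed from the auxiliary pipe dream made of the earlier columns, whose word
at column `c` is already the final one. -/
def greedyColumn (ω π : Equiv.Perm (Fin n)) (c : ℕ) :
    {f : ℕ → Bool // ∀ r, f r = true → r + c + 2 ≤ n} :=
  let P : PipeDream n :=
    { cross := fun r c' => if h : c' < c then (greedyColumn ω π c').1 r else false
      inShape := fun r c' hc => by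
        split_ifs at hc with h
        exact (greedyColumn ω π c').2 r hc }
  ⟨greedyCross π c (P.word c) (exitLabel ω c), fun _ hr => (decide_eq_true_iff.1 hr).1⟩
termination_by c

def greedy (ω π : Equiv.Perm (Fin n)) : PipeDream n :=
  ⟨fun r c => (greedyColumn ω π c).1 r, fun r c hc => (greedyColumn ω π c).2 r hc⟩

lemma cross_greedy (ω π : Equiv.Perm (Fin n)) (r c : ℕ) :
    (greedy ω π).cross r c = greedyCross π c ((greedy ω π).word c) (exitLabel ω c) r := by
  change (greedyColumn ω π c).1 r = _
  rw [greedyColumn]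
  exact congrArg (fun w => greedyCross π c w (exitLabel ω c) r)
    (word_congr _ _ fun t c' h => dif_pos h)

def exitRow (ω π : Equiv.Perm (Fin n)) (c : ℕ) : ℕ :=
  rowOf n c ((greedy ω π).word c) (exitLabel ω c)

variable {ω π : Equiv.Perm (Fin n)}

lemma exitLabel_of_lt {c : ℕ} (hc : c < n) : exitLabel ω c = ω ⟨c, hc⟩ := dif_pos hc

lemma cross_greedy_eq_false_iff {r c : ℕ} (hr : r + c + 2 ≤ n) :
    (greedy ω π).cross r c = false ↔
      r = exitRow ω π c ∨
        (exitRow ω π c < r ∧ IsSuffixMin π c ((greedy ω π).word c) r) := by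
  rw [cross_greedy, greedyCross, decide_eq_false_iff_not, exitRow]
  simp only [hr, true_and, not_not]

lemma firstElbow_greedy {c : ℕ} (hc : c < n) : (greedy ω π).firstElbow c = exitRow ω π c := by
  have hp : exitRow ω π c < n - c := rowOf_lt hc _ _
  have helbow : (greedy ω π).cross (exitRow ω π c) c = false := by
    by_cases hb : exitRow ω π c + c + 2 ≤ n
    · exact (cross_greedy_eq_false_iff hb).2 (Or.inl rfl)
    · exact cross_eq_false_of_not_le _ hb
  refine le_antisymm (firstElbow_le helbow) (not_lt.1 fun hlt => ?_)
  have := (cross_greedy_eq_false_iff (ω := ω) (π := π) (c := c) (by omega)).1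
    (cross_firstElbow c)
  omega

lemma cross_greedy_eq_false_iff_isSuffixMin {r c : ℕ} (hr : (greedy ω π).firstElbow c < r)
    (hb : r + c + 2 ≤ n) :
    (greedy ω π).cross r c = false ↔ IsSuffixMin π c ((greedy ω π).word c) r := by
  rw [firstElbow_greedy (by omega)] at hr
  rw [cross_greedy_eq_false_iff hb]
  simp [hr, hr.ne']

lemma exitPipe_greedy {c : ℕ} (hc : c < n) : (greedy ω π).exitPipe c = exitLabel ω c := by
  induction c using Nat.strong_induction_on with
  | _ c ih =>
    have hmem : ∃ s < n - c, (greedy ω π).word c s = exitLabel ω c := by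
      rw [exists_word_eq_iff hc]
      refine ⟨by rw [exitLabel_of_lt hc]; exact (ω _).isLt, fun c' hc' h => hc'.ne ?_⟩
      rw [ih c' hc' (by omega), exitLabel_of_lt (by omega), exitLabel_of_lt hc] at h
      exact congrArg Fin.val (ω.injective (Fin.ext h))
    rw [exitPipe_eq_word_firstElbow, firstElbow_greedy hc]
    exact (rowOf_spec hmem).2

lemma hasExitPerm_greedy : (greedy ω π).HasExitPerm ω := fun c => by
  rw [exitPipe_greedy c.isLt, exitLabel_of_lt c.isLt]

lemma word_greedy_exitRow {c : ℕ} (hc : c < n) :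
    (greedy ω π).word c (exitRow ω π c) = exitLabel ω c := by
  rw [← firstElbow_greedy hc, ← exitPipe_eq_word_firstElbow, exitPipe_greedy hc]

lemma exitLabel_ne_word_greedy {c c' s : ℕ} (hc' : c' < c) (hc : c < n) (hs : s < n - c) :
    exitLabel ω c' ≠ (greedy ω π).word c s := by
  rw [← exitPipe_greedy (by omega)]
  exact ((exists_word_eq_iff hc _).1 ⟨s, hs, rfl⟩).2 c' hc'

/-- The weak order hypothesis enters here: a pipe larger than the exiting one must come after it
in `π`, otherwise the pair is an inversion of `π`, hence of `ω`, and the larger pipe would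
already have exited. -/
lemma rank_exitLabel_lt_of_exitLabel_lt (h : WeakLE π ω) {c s : ℕ} (hc : c < n) (hs : s < n - c)
    (hgt : exitLabel ω c < (greedy ω π).word c s) :
    rank π (exitLabel ω c) < rank π ((greedy ω π).word c s) := by
  have hv := word_lt (P := greedy ω π) hs
  set v := (greedy ω π).word c s
  have hne : exitLabel ω c ≠ v := hgt.ne
  rw [exitLabel_of_lt hc] at hgt hne ⊢
  refine lt_of_not_ge fun hle => ?_
  have hπ : π⁻¹ ⟨v, hv⟩ < π⁻¹ (ω ⟨c, hc⟩) := (rank_lt_rank_iff π ⟨v, hv⟩ _).1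
    (lt_of_le_of_ne hle fun h => hne (rank_injective π h).symm)
  have hω := h (ω ⟨c, hc⟩) ⟨v, hv⟩ hgt hπ
  rw [show ω⁻¹ (ω ⟨c, hc⟩) = ⟨c, hc⟩ from ω.symm_apply_apply _] at hω
  refine exitLabel_ne_word_greedy (ω := ω) (π := π) hω hc hs ?_
  rw [exitLabel_of_lt (ω⁻¹ ⟨v, hv⟩).isLt, Fin.eta]
  exact congrArg Fin.val (ω.apply_symm_apply _)

lemma rank_south_lt_rank_west_greedy {t c : ℕ} (hct : (greedy ω π).cross t c = true)
    (ht : (greedy ω π).firstElbow c < t) :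
    rank π ((greedy ω π).south t c) < rank π ((greedy ω π).west t c) :=
  rank_south_lt_rank_west_of_isSuffixMin
    (fun _ hr hb => cross_greedy_eq_false_iff_isSuffixMin hr hb) hct ht

lemma rank_lt_rank_of_word_lt_greedy {c s s' : ℕ} (hss : s < s') (hs' : s' < n - c)
    (hinv : (greedy ω π).word c s' < (greedy ω π).word c s) :
    rank π ((greedy ω π).word c s) < rank π ((greedy ω π).word c s') := by
  induction c generalizing s s' with
  | zero => rw [word_zero, word_zero] at hinv; omega
  | succ c ih =>
    rw [word_succ_eq_word_source (by omega), word_succ_eq_word_source (by omega)] at hinv ⊢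
    rcases lt_or_gt_of_ne ((source_injective (P := greedy ω π) c).ne hss.ne) with hlt | hgt
    · exact ih hlt (source_lt (by omega)) hinv
    · obtain ⟨hct, hself, hnext, hfirst⟩ := cross_of_source_lt_source hss hgt
      have := rank_south_lt_rank_west_greedy hct hfirst
      rwa [south_eq_word_nextElbow (by omega), hnext, ← hself] at this

lemma word_greedy_ne_exitLabel {c r : ℕ} (hc : c < n) (hr : r < n - c)
    (hne : r ≠ exitRow ω π c) : (greedy ω π).word c r ≠ exitLabel ω c := fun h =>
  hne (word_injOn hr (rowOf_lt hc _ _) (h.trans (word_greedy_exitRow hc).symm))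

lemma word_lt_exitLabel_of_lt_exitRow (h : WeakLE π ω) {c r : ℕ} (hc : c < n)
    (hr : r < exitRow ω π c) : (greedy ω π).word c r < exitLabel ω c := by
  have hp : exitRow ω π c < n - c := rowOf_lt hc _ _
  refine lt_of_le_of_ne (not_lt.1 fun hgt => ?_) (word_greedy_ne_exitLabel hc (by omega) hr.ne)
  have h₁ := rank_exitLabel_lt_of_exitLabel_lt h hc (by omega) hgt
  have h₂ := rank_lt_rank_of_word_lt_greedy (ω := ω) (π := π) hr hp
    (by rwa [word_greedy_exitRow hc])
  rw [word_greedy_exitRow hc] at h₂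
  exact h₁.not_gt h₂

lemma rank_exitLabel_lt_of_exitRow_lt (h : WeakLE π ω) {c r : ℕ} (hc : c < n)
    (hr : exitRow ω π c < r) (hr' : r < n - c) :
    rank π (exitLabel ω c) < rank π ((greedy ω π).word c r) := by
  rcases lt_or_gt_of_ne (word_greedy_ne_exitLabel hc hr' hr.ne') with hlt | hgt
  · have := rank_lt_rank_of_word_lt_greedy (ω := ω) (π := π) hr hr'
      (by rwa [word_greedy_exitRow hc])
    rwa [word_greedy_exitRow hc] at this
  · exact rank_exitLabel_lt_of_exitLabel_lt h hc hr' hgt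

lemma west_lt_south_greedy (h : WeakLE π ω) {t c : ℕ} (hct : (greedy ω π).cross t c = true) :
    (greedy ω π).west t c < (greedy ω π).south t c := by
  have hb := (greedy ω π).inShape t c hct
  have hc : c < n := by omega
  have hfirst := firstElbow_greedy (ω := ω) (π := π) hc
  have hwest := rank_south_lt_rank_west_greedy (ω := ω) (π := π) (t := t) (c := c)
  rw [south_eq_word_nextElbow hb] at hwest ⊢
  change (greedy ω π).word c t < _
  rcases lt_trichotomy t (exitRow ω π c) with hlt | rfl | hlt
  · rw [nextElbow_eq_firstElbow (hfirst ▸ hlt), hfirst, word_greedy_exitRow hc]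
    exact word_lt_exitLabel_of_lt_exitRow h hc hlt
  · rw [← hfirst, cross_firstElbow] at hct
    cases hct
  · refine lt_of_not_ge fun hge => (hwest hct (hfirst ▸ hlt)).not_gt ?_
    refine rank_lt_rank_of_word_lt_greedy (lt_nextElbow c t) (nextElbow_lt hb)
      (lt_of_le_of_ne hge fun h' => (lt_nextElbow (P := greedy ω π) c t).ne' ?_)
    exact word_injOn (nextElbow_lt hb) (by omega) h'

lemma linExt_greedy (h : WeakLE π ω) : (greedy ω π).LinExt π := by
  intro i j harc
  rw [← rank_lt_rank_iff]
  obtain ⟨s, c, hb, hcs, hi, hj⟩ := harc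
  rw [← hi, ← hj, south_eq_word_nextElbow hb]
  change rank π ((greedy ω π).word c s) < _
  have hc : c < n := by omega
  have hfirst := firstElbow_greedy (ω := ω) (π := π) hc
  have hnb := nextElbow_lt (P := greedy ω π) hb
  rcases (hfirst ▸ firstElbow_le hcs : exitRow ω π c ≤ s).eq_or_lt with rfl | hlt
  · rw [word_greedy_exitRow hc]
    exact rank_exitLabel_lt_of_exitRow_lt h hc (lt_nextElbow c _) hnb
  · exact (cross_greedy_eq_false_iff_isSuffixMin (hfirst ▸ hlt) hb).1 hcs _ hnb
      (lt_nextElbow c s)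

lemma reduced_greedy (h : WeakLE π ω) : (greedy ω π).Reduced :=
  reduced_of_west_lt_south fun _ _ => west_lt_south_greedy h

end Greedy

section Uniqueness

protected lemma ext {P Q : PipeDream n} (h : ∀ r c, P.cross r c = Q.cross r c) : P = Q := by
  obtain ⟨f, _⟩ := P
  obtain ⟨g, _⟩ := Q
  congr
  funext r c
  exact h r c

lemma cross_eq_of_firstElbow_eq {P Q : PipeDream n} {c : ℕ}
    (hfirst : P.firstElbow c = Q.firstElbow c)
    (hbelow : ∀ t, P.firstElbow c < t → t + c + 2 ≤ n →
      (P.cross t c = false ↔ Q.cross t c = false))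
    (t : ℕ) : P.cross t c = Q.cross t c := by
  rcases lt_trichotomy t (P.firstElbow c) with h | rfl | h
  · rw [cross_of_lt_firstElbow h, cross_of_lt_firstElbow (hfirst ▸ h)]
  · rw [cross_firstElbow, hfirst, cross_firstElbow]
  · by_cases hb : t + c + 2 ≤ n
    · have := hbelow t h hb
      revert this
      cases P.cross t c <;> cases Q.cross t c <;> simp
    · rw [cross_eq_false_of_not_le _ hb, cross_eq_false_of_not_le _ hb]

variable {ω π : Equiv.Perm (Fin n)} {Q : PipeDream n}

lemma eq_greedy (hred : Q.Reduced) (hexit : Q.HasExitPerm ω) (hlin : Q.LinExt π) :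
    Q = greedy ω π := by
  refine PipeDream.ext fun t c => ?_
  induction c using Nat.strong_induction_on generalizing t with
  | _ c ih =>
    by_cases hc : c < n
    swap
    · rw [cross_eq_false_of_not_le _ (by omega), cross_eq_false_of_not_le _ (by omega)]
    have hword : Q.word c = (greedy ω π).word c := word_congr _ _ fun t c' h => ih c' h t
    have hfirst : Q.firstElbow c = (greedy ω π).firstElbow c := by
      rw [firstElbow_greedy hc]
      refine word_injOn (P := Q) (firstElbow_lt hc) (rowOf_lt hc _ _) ?_
      rw [← exitPipe_eq_word_firstElbow, hexit ⟨c, hc⟩, hword, word_greedy_exitRow hc,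
        exitLabel_of_lt hc]
    refine cross_eq_of_firstElbow_eq hfirst (fun t ht hb => ?_) t
    rw [cross_eq_false_iff_isSuffixMin hred hlin ht hb, hword,
      cross_greedy_eq_false_iff_isSuffixMin (hfirst ▸ ht) hb]

end Uniqueness

end PipeDream

/-- If `π ≤ ω` in the weak order on `S_n`, then `π` is a linear
extension of exactly one acyclic reduced pipe dream `P ∈ Π(ω)`. -/
theorem existsUnique_pipeDream_linExt (n : ℕ) (ω π : Equiv.Perm (Fin n))
    (h : WeakLE π ω) :
    ∃! P : PipeDream n, P.Reduced ∧ P.HasExitPerm ω ∧ P.Acyclic ∧ P.LinExt π := by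
  have hlin := PipeDream.linExt_greedy h
  exact ⟨_, ⟨PipeDream.reduced_greedy h, PipeDream.hasExitPerm_greedy, hlin.acyclic, hlin⟩,
    fun Q ⟨hred, hexit, _, hQ⟩ => PipeDream.eq_greedy hred hexit hQ⟩
end
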